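/- For every τ ≥ 0, the soft-thresholding risk r(τ; G) is differentiable in τ and its derivative satisfies ∂r(τ; G)/∂τ = 2·E_μ[∫_{−∞}^{−μ} w·φ(w−τ) dw] + 2·E_μ[∫_{−∞}^{μ} w·φ(w−τ) dw], where the expectations are over μ ~ G. -/

import Mathlib

open MeasureTheory

/-- Standard Gaussian density `φ(z) = e^{-z²/2}/√(2π)`. -/
noncomputable def gaussPDF (z : ℝ) : ℝ := Real.exp (-z ^ 2 / 2) / Real.sqrt (2 * Real.pi)

/-- Soft-thresholding function `η(x; τ) = sign(x)·max(|x| − τ, 0)`. -/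
noncomputable def softThr (x τ : ℝ) : ℝ := Real.sign x * max (|x| - τ) 0

/-- Soft-thresholding risk `r(τ; G) = E_{μ∼G, Z∼N(0,1)}[(η(μ + Z; τ) − μ)²]`. -/
noncomputable def stRisk (G : Measure ℝ) (τ : ℝ) : ℝ :=
  ∫ m, (∫ z, (softThr (m + z) τ - m) ^ 2 * gaussPDF z) ∂G

/-!
Write `r(τ; G) = ∫ F(τ; m, z) d(G ⊗ dz)` with `F(τ; m, z) = (η(m + z; τ) - m)² φ(z)`. Since
`η(x; ·)` is 1-Lipschitz, `F(·; m, z)` is locally Lipschitz with a constant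
`O((1 + |m| + |z|) φ(z))`, integrable because `E μ² < ∞`, so the derivative may be taken under the
integral. Off the null set `{|m + z| = τ}`, `η(m + z; ·)` is locally `m + z ∓ τ` or `0`, which gives
the pointwise derivative; the shifts `w = z + τ` and `w = τ - z` turn its `z`-integral into the two
integrals of the formula.
-/

open Set Filter Real

lemma gaussPDF_nonneg (z : ℝ) : 0 ≤ gaussPDF z := by unfold gaussPDF; positivity

lemma gaussPDF_neg (z : ℝ) : gaussPDF (-z) = gaussPDF z := by simp [gaussPDF]

@[fun_prop]
lemma measurable_gaussPDF : Measurable gaussPDF := by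
  unfold gaussPDF
  fun_prop

lemma integrable_pow_mul_gaussPDF (n : ℕ) : Integrable fun z => z ^ n * gaussPDF z := by
  have h := (integrable_rpow_mul_exp_neg_mul_sq (by norm_num : (0 : ℝ) < 1 / 2)
    (by linarith [n.cast_nonneg (α := ℝ)] : (-1 : ℝ) < n)).div_const √(2 * π)
  refine h.congr (ae_of_all _ fun z => ?_)
  simp only [gaussPDF, rpow_natCast]
  ring_nf

lemma integrable_gaussPDF : Integrable gaussPDF := by
  simpa using integrable_pow_mul_gaussPDF 0

lemma integrable_abs_mul_gaussPDF : Integrable fun z => |z| * gaussPDF z := by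
  refine (integrable_pow_mul_gaussPDF 1).abs.congr (ae_of_all _ fun z => ?_)
  simp [abs_mul, abs_of_nonneg (gaussPDF_nonneg z)]

lemma softThr_of_pos {x t : ℝ} (hx : 0 < x) (ht : t < x) : softThr x t = x - t := by
  rw [softThr, sign_of_pos hx, abs_of_pos hx, max_eq_left (by linarith), one_mul]

lemma softThr_of_neg {x t : ℝ} (hx : x < 0) (ht : t < -x) : softThr x t = x + t := by
  rw [softThr, sign_of_neg hx, abs_of_neg hx, max_eq_left (by linarith)]
  ring

lemma softThr_of_abs_le {x t : ℝ} (h : |x| ≤ t) : softThr x t = 0 := by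
  rw [softThr, max_eq_right (by linarith), mul_zero]

lemma Real.abs_sign_le_one (x : ℝ) : |Real.sign x| ≤ 1 := by
  rcases Real.sign_apply_eq x with h | h | h <;> simp [h]

lemma Real.monotone_sign : Monotone Real.sign := fun a b hab => by
  simp only [Real.sign]
  split_ifs <;> linarith

lemma abs_softThr_le (x t : ℝ) : |softThr x t| ≤ |x| + |t| := by
  rw [softThr, abs_mul]
  refine (mul_le_of_le_one_left (abs_nonneg _) (abs_sign_le_one x)).trans ?_
  rw [abs_of_nonneg (le_max_right _ _), max_le_iff]
  constructor <;> linarith [neg_abs_le t, abs_nonneg x, abs_nonneg t]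

lemma abs_softThr_sub_softThr_le (x t s : ℝ) : |softThr x t - softThr x s| ≤ |t - s| :=
  calc |softThr x t - softThr x s|
      = |Real.sign x| * |max (|x| - t) 0 - max (|x| - s) 0| := by
        rw [softThr, softThr, ← mul_sub, abs_mul]
    _ ≤ |max (|x| - t) 0 - max (|x| - s) 0| :=
        mul_le_of_le_one_left (abs_nonneg _) (abs_sign_le_one x)
    _ ≤ |(|x| - t) - (|x| - s)| := abs_max_sub_max_le_abs _ _ _
    _ = |t - s| := by rw [← abs_neg]; ring_nf

@[fun_prop]
lemma measurable_softThr (t : ℝ) : Measurable fun x => softThr x t :=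
  monotone_sign.measurable.mul (by fun_prop)

noncomputable def riskIntegrand (τ : ℝ) (p : ℝ × ℝ) : ℝ :=
  (softThr (p.1 + p.2) τ - p.1) ^ 2 * gaussPDF p.2

lemma riskIntegrand_le (t : ℝ) (p : ℝ × ℝ) :
    riskIntegrand t p ≤ 12 * p.1 ^ 2 * gaussPDF p.2 + (3 * p.2 ^ 2 + 3 * t ^ 2) * gaussPDF p.2 := by
  have hdev : |softThr (p.1 + p.2) t - p.1| ≤ |p.2| + |t| + 2 * |p.1| := by
    have := abs_softThr_le (p.1 + p.2) t
    have := abs_add_le p.1 p.2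
    have := abs_sub (softThr (p.1 + p.2) t) p.1
    linarith
  have hsq : (softThr (p.1 + p.2) t - p.1) ^ 2 ≤ 3 * p.2 ^ 2 + 3 * t ^ 2 + 12 * p.1 ^ 2 := by
    rw [← sq_abs, ← sq_abs p.2, ← sq_abs t, ← sq_abs p.1]
    nlinarith [abs_nonneg (softThr (p.1 + p.2) t - p.1), sq_nonneg (|p.2| - |t|),
      sq_nonneg (|p.2| - 2 * |p.1|), sq_nonneg (|t| - 2 * |p.1|)]
  have := mul_le_mul_of_nonneg_right hsq (gaussPDF_nonneg p.2)
  rw [riskIntegrand]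
  linarith

lemma abs_riskIntegrand_sub_le (t s : ℝ) (p : ℝ × ℝ) :
    |riskIntegrand t p - riskIntegrand s p|
      ≤ (4 * |p.1| + 2 * |p.2| + |t| + |s|) * gaussPDF p.2 * |t - s| := by
  set x := p.1 + p.2
  have hsum : |softThr x t + softThr x s - 2 * p.1| ≤ 4 * |p.1| + 2 * |p.2| + |t| + |s| := by
    have := abs_softThr_le x t
    have := abs_softThr_le x s
    have := abs_add_le p.1 p.2
    have := abs_add_le (softThr x t + softThr x s) (-(2 * p.1))
    have := abs_add_le (softThr x t) (softThr x s)
    simp only [abs_neg, abs_mul, abs_two, ← sub_eq_add_neg] at *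
    linarith
  calc |riskIntegrand t p - riskIntegrand s p|
      = |(softThr x t - softThr x s) * (softThr x t + softThr x s - 2 * p.1) * gaussPDF p.2| := by
        change |(softThr x t - p.1) ^ 2 * gaussPDF p.2 - (softThr x s - p.1) ^ 2 * gaussPDF p.2| = _
        ring_nf
    _ = |softThr x t - softThr x s| * |softThr x t + softThr x s - 2 * p.1| * gaussPDF p.2 := by
        rw [abs_mul, abs_mul, abs_of_nonneg (gaussPDF_nonneg _)]
    _ ≤ |t - s| * (4 * |p.1| + 2 * |p.2| + |t| + |s|) * gaussPDF p.2 :=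
        mul_le_mul_of_nonneg_right (mul_le_mul (abs_softThr_sub_softThr_le x t s) hsum
          (abs_nonneg _) (abs_nonneg _)) (gaussPDF_nonneg _)
    _ = _ := by ring

noncomputable def riskLipBound (τ : ℝ) (p : ℝ × ℝ) : ℝ :=
  (4 * |p.1| + 2 * |p.2| + 2 * |τ| + 2) * gaussPDF p.2

lemma lipschitzOnWith_riskIntegrand (τ : ℝ) (p : ℝ × ℝ) :
    LipschitzOnWith (nnabs (riskLipBound τ p)) (riskIntegrand · p) (Metric.ball τ 1) := by
  refine LipschitzOnWith.of_dist_le_mul fun t ht s hs => ?_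
  have hball : ∀ u ∈ Metric.ball τ 1, |u| ≤ |τ| + 1 := fun u hu => by
    have := abs_sub_abs_le_abs_sub u τ
    rw [Metric.mem_ball, dist_eq] at hu
    linarith
  have hbound : 0 ≤ riskLipBound τ p := mul_nonneg (by positivity) (gaussPDF_nonneg _)
  rw [dist_eq, dist_eq, coe_nnabs, abs_of_nonneg hbound]
  refine (abs_riskIntegrand_sub_le t s p).trans ?_
  refine mul_le_mul_of_nonneg_right (mul_le_mul_of_nonneg_right ?_ (gaussPDF_nonneg _))
    (abs_nonneg _)
  linarith [hball t ht, hball s hs]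

section Integrability

variable {G : Measure ℝ} [IsFiniteMeasure G]

lemma integrable_prod_mul_add {f g h : ℝ → ℝ} (hf : Integrable f G) (hg : Integrable g)
    (hh : Integrable h) : Integrable (fun p : ℝ × ℝ => f p.1 * g p.2 + h p.2) (G.prod volume) :=
  (hf.mul_prod hg).add (hh.comp_snd G)

lemma integrable_riskIntegrand (hG : Integrable (fun m => m ^ 2) G) (t : ℝ) :
    Integrable (riskIntegrand t) (G.prod volume) := by
  have hmeas : Measurable (riskIntegrand t) := by
    unfold riskIntegrand
    fun_prop
  have hdom := integrable_prod_mul_add (hG.const_mul 12) integrable_gaussPDF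
    (((integrable_pow_mul_gaussPDF 2).const_mul 3).add (integrable_gaussPDF.const_mul (3 * t ^ 2)))
  refine hdom.mono' hmeas.aestronglyMeasurable (ae_of_all _ fun p => ?_)
  have hnonneg : 0 ≤ riskIntegrand t p := mul_nonneg (sq_nonneg _) (gaussPDF_nonneg _)
  rw [norm_of_nonneg hnonneg]
  refine (riskIntegrand_le t p).trans_eq ?_
  simp only [Pi.add_apply]
  ring

lemma integrable_riskLipBound (hG : Integrable (fun m => m ^ 2) G) (τ : ℝ) :
    Integrable (riskLipBound τ) (G.prod volume) := by
  have hid : Integrable id G :=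
    ((memLp_two_iff_integrable_sq aestronglyMeasurable_id).2 hG).integrable one_le_two
  refine (integrable_prod_mul_add (hid.abs.const_mul 4) integrable_gaussPDF
    ((integrable_abs_mul_gaussPDF.const_mul 2).add
      (integrable_gaussPDF.const_mul (2 * |τ| + 2)))).congr (ae_of_all _ fun p => ?_)
  simp only [riskLipBound, id, Pi.add_apply]
  ring

end Integrability

noncomputable def gaussMeanIntegrand (τ w : ℝ) : ℝ := w * gaussPDF (w - τ)

@[fun_prop]
lemma measurable_gaussMeanIntegrand (τ : ℝ) : Measurable (gaussMeanIntegrand τ) := by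
  unfold gaussMeanIntegrand
  fun_prop

lemma integrable_gaussMeanIntegrand (τ : ℝ) : Integrable (gaussMeanIntegrand τ) := by
  have h := ((integrable_pow_mul_gaussPDF 1).add (integrable_gaussPDF.const_mul τ)).comp_sub_right τ
  refine h.congr (ae_of_all _ fun w => ?_)
  simp only [gaussMeanIntegrand, Pi.add_apply]
  ring

-- `2 (z + τ) φ(z)` on `{m + z < -τ}` plus `2 (τ - z) φ(z)` on `{m + z > τ}`, written through the
-- substitutions `w = z + τ` and `w = τ - z` (`φ` is even).
noncomputable def riskIntegrandDeriv (τ : ℝ) (p : ℝ × ℝ) : ℝ :=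
  2 * (Iio (-p.1)).indicator (gaussMeanIntegrand τ) (p.2 + τ) +
    2 * (Iio p.1).indicator (gaussMeanIntegrand τ) (τ - p.2)

lemma hasDerivAt_riskIntegrand {τ : ℝ} (hτ : 0 ≤ τ) {p : ℝ × ℝ} (hpos : p.1 + p.2 ≠ τ)
    (hneg : p.1 + p.2 ≠ -τ) :
    HasDerivAt (riskIntegrand · p) (riskIntegrandDeriv τ p) τ := by
  obtain ⟨m, z⟩ := p
  simp only [riskIntegrandDeriv, gaussMeanIntegrand, indicator, mem_Iio] at hpos hneg ⊢
  rcases lt_or_gt_of_ne hpos with hbelow | habove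
  · rcases lt_or_gt_of_ne hneg with hlow | hmid
    · have hloc : (riskIntegrand · (m, z)) =ᶠ[nhds τ] fun t => (z + t) ^ 2 * gaussPDF z := by
        filter_upwards [gt_mem_nhds (show τ < -(m + z) by linarith)] with t ht
        rw [riskIntegrand, softThr_of_neg (by linarith) ht]
        ring
      have hd := (((hasDerivAt_id τ).const_add z).pow 2).mul_const (gaussPDF z)
      refine (hd.congr_of_eventuallyEq hloc).congr_deriv ?_
      rw [if_pos (by linarith), if_neg (by linarith), add_sub_cancel_right]
      simp only [id, Nat.cast_ofNat]
      ring
    · have hloc : (riskIntegrand · (m, z)) =ᶠ[nhds τ] fun _ => (0 - m) ^ 2 * gaussPDF z := by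
        filter_upwards [lt_mem_nhds (show |m + z| < τ from abs_lt.2 ⟨hmid, hbelow⟩)] with t ht
        rw [riskIntegrand, softThr_of_abs_le ht.le]
      refine ((hasDerivAt_const τ _).congr_of_eventuallyEq hloc).congr_deriv ?_
      rw [if_neg (by linarith), if_neg (by linarith)]
      ring
  · have hloc : (riskIntegrand · (m, z)) =ᶠ[nhds τ] fun t => (z - t) ^ 2 * gaussPDF z := by
      filter_upwards [gt_mem_nhds habove] with t ht
      rw [riskIntegrand, softThr_of_pos (by linarith) ht]
      ring
    have hd := (((hasDerivAt_id τ).const_sub z).pow 2).mul_const (gaussPDF z)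
    refine (hd.congr_of_eventuallyEq hloc).congr_deriv ?_
    rw [if_neg (by linarith), if_pos (by linarith), sub_sub_cancel_left, gaussPDF_neg]
    simp only [id, Nat.cast_ofNat]
    ring

lemma ae_add_ne (G : Measure ℝ) [SFinite G] (c : ℝ) :
    ∀ᵐ p ∂(G.prod volume), p.1 + p.2 ≠ c := by
  rw [Measure.ae_prod_iff_ae_ae (p := fun p : ℝ × ℝ => p.1 + p.2 ≠ c)
    ((measurableSet_singleton c).compl.preimage (by fun_prop))]
  exact ae_of_all _ fun m => (Measure.ae_ne volume (c - m)).mono fun z hz h => hz (by linarith)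

lemma measurable_indicator_Iio_comp {α β : Type*} [MeasurableSpace α] [MeasurableSpace β]
    {f : ℝ → ℝ} {a : α → ℝ} {e : β → ℝ} (hf : Measurable f) (ha : Measurable a)
    (he : Measurable e) : Measurable fun p : α × β => (Iio (a p.1)).indicator f (e p.2) := by
  simp only [indicator, mem_Iio]
  exact Measurable.ite (measurableSet_lt (he.comp measurable_snd) (ha.comp measurable_fst))
    (hf.comp (he.comp measurable_snd)) measurable_const

lemma measurable_riskIntegrandDeriv (τ : ℝ) : Measurable (riskIntegrandDeriv τ) :=
  ((measurable_indicator_Iio_comp (by fun_prop) measurable_neg (measurable_add_const τ)).const_mul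
    2).add ((measurable_indicator_Iio_comp (by fun_prop) measurable_id
      (measurable_const_sub τ)).const_mul 2)

lemma integrable_indicator_Iio_comp_snd {G : Measure ℝ} [IsFiniteMeasure G] {f a e : ℝ → ℝ}
    (hf : Measurable f) (ha : Measurable a) (he : Measurable e) (hfe : Integrable (f ∘ e)) :
    Integrable (fun p : ℝ × ℝ => (Iio (a p.1)).indicator f (e p.2)) (G.prod volume) :=
  (hfe.comp_snd G).mono (measurable_indicator_Iio_comp hf ha he).aestronglyMeasurable
    (ae_of_all _ fun _ => norm_indicator_le_norm_self _ _)

lemma integral_riskIntegrandDeriv (G : Measure ℝ) [IsFiniteMeasure G] (τ : ℝ) :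
    ∫ p, riskIntegrandDeriv τ p ∂(G.prod volume) =
      2 * ∫ m, (∫ w in Iio (-m), w * gaussPDF (w - τ)) ∂G +
        2 * ∫ m, (∫ w in Iio m, w * gaussPDF (w - τ)) ∂G := by
  have hf := integrable_gaussMeanIntegrand τ
  have hmeas := measurable_gaussMeanIntegrand τ
  have hlower : Integrable (fun p : ℝ × ℝ => (Iio (-p.1)).indicator (gaussMeanIntegrand τ)
      (p.2 + τ)) (G.prod volume) :=
    integrable_indicator_Iio_comp_snd hmeas measurable_neg (measurable_add_const τ)
      (hf.comp_add_right τ)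
  have hupper : Integrable (fun p : ℝ × ℝ => (Iio p.1).indicator (gaussMeanIntegrand τ)
      (τ - p.2)) (G.prod volume) :=
    integrable_indicator_Iio_comp_snd hmeas measurable_id (measurable_const_sub τ)
      (hf.comp_sub_left τ)
  have hlower_eq (m : ℝ) : ∫ z, (Iio (-m)).indicator (gaussMeanIntegrand τ) (z + τ) =
      ∫ w in Iio (-m), w * gaussPDF (w - τ) :=
    (integral_add_right_eq_self (fun w => (Iio (-m)).indicator _ w) τ).trans
      (integral_indicator measurableSet_Iio)
  have hupper_eq (m : ℝ) : ∫ z, (Iio m).indicator (gaussMeanIntegrand τ) (τ - z) =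
      ∫ w in Iio m, w * gaussPDF (w - τ) :=
    (integral_sub_left_eq_self (fun w => (Iio m).indicator _ w) volume τ).trans
      (integral_indicator measurableSet_Iio)
  unfold riskIntegrandDeriv
  rw [integral_add (hlower.const_mul 2) (hupper.const_mul 2), integral_const_mul,
    integral_const_mul, integral_prod _ hlower, integral_prod _ hupper]
  simp only [hlower_eq, hupper_eq]

/-- the soft-thresholding risk is differentiable in `τ` with
`∂r/∂τ = 2·E_μ[∫_{−∞}^{−μ} w·φ(w−τ) dw] + 2·E_μ[∫_{−∞}^{μ} w·φ(w−τ) dw]`. -/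
theorem stRisk_hasDerivAt (G : Measure ℝ) [IsProbabilityMeasure G]
    (hG : Integrable (fun m => m ^ 2) G) :
    ∀ τ : ℝ, 0 ≤ τ →
      HasDerivAt (stRisk G)
        (2 * ∫ m, (∫ w in Set.Iio (-m), w * gaussPDF (w - τ)) ∂G +
         2 * ∫ m, (∫ w in Set.Iio m, w * gaussPDF (w - τ)) ∂G) τ := by
  intro τ hτ
  have hrisk : stRisk G = fun t => ∫ p, riskIntegrand t p ∂(G.prod volume) :=
    funext fun t => (integral_prod _ (integrable_riskIntegrand hG t)).symm
  have hdiff : ∀ᵐ p ∂(G.prod volume), HasDerivAt (riskIntegrand · p) (riskIntegrandDeriv τ p) τ :=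
    ((ae_add_ne G τ).and (ae_add_ne G (-τ))).mono fun p hp =>
      hasDerivAt_riskIntegrand hτ hp.1 hp.2
  obtain ⟨-, hderiv⟩ := hasDerivAt_integral_of_dominated_loc_of_lip
    (Metric.ball_mem_nhds τ one_pos)
    (Eventually.of_forall fun t => (integrable_riskIntegrand hG t).aestronglyMeasurable)
    (integrable_riskIntegrand hG τ) (measurable_riskIntegrandDeriv τ).aestronglyMeasurable
    (ae_of_all _ (lipschitzOnWith_riskIntegrand τ)) (integrable_riskLipBound hG τ) hdiff
  rw [hrisk, ← integral_riskIntegrandDeriv]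
  exact hderiv
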